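/- arXiv:1004.1987 — 7 statements merged into one kernel-verified Lean document; each statement's English description precedes it below -/
import Mathlib

section
/- Let E be an n-dimensional complex evolution algebra with natural basis {e_1,...,e_n} and multiplication e_i·e_i = λ_i(e_1 + ⋯ + e_k) for all i, where 1 ≤ k ≤ n and not all λ_i are zero. Then E^{(3)} = 0 if and only if Σ_{j=1}^k λ_j = 0. -/
/-- Evolution algebra multiplication on `Fin n → ℂ` determined by a structure
matrix `A`: basis vectors satisfy `eᵢ · eⱼ = 0` for `i ≠ j` and
`eᵢ · eᵢ = ∑ k, A i k • e k`. -/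
noncomputable def eMul {n : ℕ} (A : Matrix (Fin n) (Fin n) ℂ) (x y : Fin n → ℂ) : Fin n → ℂ :=
  fun k => ∑ p, x p * y p * A p k

/-- Product of two subspaces: the span of all products. -/
noncomputable def sMul {n : ℕ} (A : Matrix (Fin n) (Fin n) ℂ) (S T : Submodule ℂ (Fin n → ℂ)) :
    Submodule ℂ (Fin n → ℂ) :=
  Submodule.span ℂ {z | ∃ x ∈ S, ∃ y ∈ T, z = eMul A x y}

/-- `dPow A k = E⁽ᵏ⁾`: `E⁽¹⁾ = E`, `E⁽ᵏ⁺¹⁾ = E⁽ᵏ⁾E⁽ᵏ⁾` (index 0 is a dummy). -/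
noncomputable def dPow {n : ℕ} (A : Matrix (Fin n) (Fin n) ℂ) : ℕ → Submodule ℂ (Fin n → ℂ)
  | 0 => ⊤
  | 1 => ⊤
  | (k+2) => sMul A (dPow A (k+1)) (dPow A (k+1))

/-- `rPow A k = E^{<k>}`: `E^{<1>} = E`, `E^{<k+1>} = E^{<k>}·E` (index 0 dummy). -/
noncomputable def rPow {n : ℕ} (A : Matrix (Fin n) (Fin n) ℂ) : ℕ → Submodule ℂ (Fin n → ℂ)
  | 0 => ⊤
  | 1 => ⊤
  | (k+2) => sMul A (rPow A (k+1)) ⊤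

/-- `pPow A k = Eᵏ`: `E¹ = E`, `Eᵏ = ∑_{i=1}^{k-1} Eⁱ·E^{k-i}` (index 0 dummy). -/
noncomputable def pPow {n : ℕ} (A : Matrix (Fin n) (Fin n) ℂ) : ℕ → Submodule ℂ (Fin n → ℂ)
  | 0 => ⊤
  | 1 => ⊤
  | (k+2) => ⨆ i : Fin (k+1), sMul A (pPow A (i.1+1)) (pPow A (k+1-i.1))
termination_by k => k
decreasing_by all_goals (have := i.isLt; omega)

/-- for the evolution algebra with `eᵢ·eᵢ = λᵢ(e₁+⋯+e_k)`,
`1 ≤ k ≤ n`, not all `λᵢ` zero, one has `E⁽³⁾ = 0 ↔ ∑_{j=1}^k λⱼ = 0`. -/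
theorem dPow_three_eq_bot_iff {n k : ℕ} (hk1 : 1 ≤ k) (hkn : k ≤ n)
    (lam : Fin n → ℂ) (hlam : ∃ i, lam i ≠ 0)
    (A : Matrix (Fin n) (Fin n) ℂ)
    (hA : ∀ i j : Fin n, A i j = if (j : ℕ) < k then lam i else 0) :
    dPow A 3 = ⊥ ↔ ∑ j ∈ Finset.filter (fun j : Fin n => (j : ℕ) < k) Finset.univ, lam j = 0 := by

  classical
  set u : Fin n → ℂ := fun j => if (j : ℕ) < k then 1 else 0 with hu
  have hmul : ∀ x y : Fin n → ℂ,
      eMul A x y = (∑ p, x p * y p * lam p) • u := by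
    intro x y
    funext j
    simp only [eMul, hA, Pi.smul_apply, hu, smul_eq_mul]
    by_cases hj : (j : ℕ) < k
    · simp [hj]
    · simp [hj]
  set S : ℂ := ∑ j ∈ Finset.filter (fun j : Fin n => (j : ℕ) < k) Finset.univ, lam j with hS
  have hSsum : (∑ p, u p * u p * lam p) = S := by
    rw [hS, Finset.sum_filter]
    apply Finset.sum_congr rfl
    intro p _
    by_cases hp : (p : ℕ) < k
    · simp [hu, hp]
    · simp [hu, hp]
  have huu : eMul A u u = S • u := by rw [hmul, hSsum]
  have hd2 : dPow A 2 ≤ Submodule.span ℂ {u} := by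
    show sMul A (dPow A 1) (dPow A 1) ≤ _
    rw [sMul, Submodule.span_le]
    rintro z ⟨x, -, y, -, rfl⟩
    rw [hmul]
    exact Submodule.smul_mem _ _ (Submodule.mem_span_singleton_self u)
  have huj0 : u ⟨0, lt_of_lt_of_le hk1 hkn⟩ = 1 := by simp [hu]; omega
  constructor
  · intro h3
    obtain ⟨i, hi⟩ := hlam
    have hei : eMul A (Pi.single i 1) (Pi.single i 1) = lam i • u := by
      rw [hmul]
      congr 1
      rw [Finset.sum_eq_single i]
      · simp
      · intro b _ hb; simp [Pi.single_apply, hb]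
      · simp
    have hmem2 : u ∈ dPow A 2 := by
      have : eMul A (Pi.single i 1) (Pi.single i 1) ∈ dPow A 2 := by
        show _ ∈ sMul A (dPow A 1) (dPow A 1)
        exact Submodule.subset_span ⟨_, Submodule.mem_top, _, Submodule.mem_top, rfl⟩
      have h' : (lam i)⁻¹ • (lam i • u) ∈ dPow A 2 := by
        rw [← hei]; exact Submodule.smul_mem _ _ this
      rwa [smul_smul, inv_mul_cancel₀ hi, one_smul] at h'
    have : eMul A u u ∈ dPow A 3 := by
      show _ ∈ sMul A (dPow A 2) (dPow A 2)
      exact Submodule.subset_span ⟨_, hmem2, _, hmem2, rfl⟩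
    rw [h3, Submodule.mem_bot, huu] at this
    have := congrFun this ⟨0, lt_of_lt_of_le hk1 hkn⟩
    simpa [huj0] using this
  · intro hS0
    rw [eq_bot_iff]
    show sMul A (dPow A 2) (dPow A 2) ≤ ⊥
    rw [sMul, Submodule.span_le]
    rintro z ⟨x, hx, y, hy, rfl⟩
    obtain ⟨a, rfl⟩ := Submodule.mem_span_singleton.mp (hd2 hx)
    obtain ⟨b, rfl⟩ := Submodule.mem_span_singleton.mp (hd2 hy)
    have : eMul A (a • u) (b • u) = (a * b) • eMul A u u := by
      rw [hmul, hmul]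
      rw [smul_smul]
      congr 1
      rw [Finset.mul_sum]
      apply Finset.sum_congr rfl
      intro p _
      simp [Pi.smul_apply, smul_eq_mul]; ring
    rw [this, huu, hS0, zero_smul, smul_zero]
    simp
end

section
/- Let E be a finite-dimensional evolution algebra whose structure matrix A is non-singular, and let T = (t_{ij}) be the matrix of an automorphism of E with respect to the natural basis. Then T has exactly one non-zero entry in each row and each column, i.e., T = D·P for a non-singular diagonal matrix D and a permutation matrix P. -/
open Function

theorem Set.exists_perm_eq_singleton_of_pairwise_disjoint {ι : Type*} [Finite ι] (S : ι → Set ι)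
    (hne : ∀ i, (S i).Nonempty) (hdisj : Pairwise (Disjoint on S)) :
    ∃ σ : Equiv.Perm ι, ∀ i, S i = {σ i} := by
  choose f hf using hne
  have hinj : Injective f := fun i j hij =>
    by_contra fun hne => Set.disjoint_left.1 (hdisj hne) (hf i) (hij ▸ hf j)
  let σ := Equiv.ofBijective f (Finite.injective_iff_bijective.1 hinj)
  refine ⟨σ, fun i => Set.eq_singleton_iff_unique_mem.2 ⟨hf i, fun p hp => ?_⟩⟩
  obtain ⟨k, rfl⟩ := σ.surjective p
  obtain rfl : k = i := by_contra fun hki => Set.disjoint_left.1 (hdisj hki) (hf k) hp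
  rfl

section EvolutionAlgebra

variable {n : ℕ} (A : Matrix (Fin n) (Fin n) ℂ)

theorem eMul_eq_vecMul (x y : Fin n → ℂ) : eMul A x y = Matrix.vecMul (x * y) A := by
  ext k
  simp only [eMul, Matrix.vecMul, dotProduct, Pi.mul_apply]

theorem eMul_single_single_of_ne {i j : Fin n} (hij : i ≠ j) :
    eMul A (Pi.single i 1) (Pi.single j 1) = 0 := by
  have hprod : (Pi.single i 1 : Fin n → ℂ) * Pi.single j 1 = 0 := by
    ext p
    by_cases hp : p = i
    · subst hp; simp [hij]
    · simp [hp]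
  rw [eMul_eq_vecMul, hprod, Matrix.zero_vecMul]

variable {A}

theorem disjoint_support_of_eMul_eq_zero (hA : IsUnit A.det) {x y : Fin n → ℂ}
    (h : eMul A x y = 0) : Disjoint (support x) (support y) := by
  have hxy : x * y = 0 := by
    refine Matrix.vecMul_injective_iff_isUnit.2 ((Matrix.isUnit_iff_isUnit_det A).2 hA) ?_
    simp only [← eMul_eq_vecMul, h, Matrix.zero_vecMul]
  refine Set.disjoint_left.2 fun p hx hy => ?_
  exact mul_ne_zero hx hy (congrFun hxy p)

end EvolutionAlgebra

/-- if the structure matrix `A` of an evolution algebra is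
non-singular, then the matrix `T` of any automorphism (w.r.t. the natural
basis) has exactly one non-zero entry in each row and each column; i.e. it is
the product of a non-singular diagonal matrix and a permutation matrix. -/
theorem automorphism_matrix_monomial {n : ℕ} (A : Matrix (Fin n) (Fin n) ℂ)
    (hA : IsUnit A.det)
    (φ : (Fin n → ℂ) ≃ₗ[ℂ] (Fin n → ℂ))
    (hφ : ∀ x y : Fin n → ℂ, φ (eMul A x y) = eMul A (φ x) (φ y))
    (T : Matrix (Fin n) (Fin n) ℂ)
    (hT : ∀ i j : Fin n, T i j = φ (Pi.single i 1) j) :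
    ((∀ i : Fin n, ∃! j : Fin n, T i j ≠ 0) ∧ (∀ j : Fin n, ∃! i : Fin n, T i j ≠ 0)) ∧
    ∃ (σ : Equiv.Perm (Fin n)) (d : Fin n → ℂ), (∀ i, d i ≠ 0) ∧
      ∀ i j : Fin n, T i j = if j = σ i then d i else 0 := by
  obtain rfl : T = fun i => φ (Pi.single i 1) := funext fun i => funext (hT i)
  have hne : ∀ i, (support (φ (Pi.single i 1))).Nonempty := fun i =>
    support_nonempty_iff.2 (φ.map_ne_zero_iff.2 (Pi.single_ne_zero_iff.2 one_ne_zero))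
  have hdisj : Pairwise (Disjoint on fun i => support (φ (Pi.single i 1))) :=
    fun i j hij => disjoint_support_of_eMul_eq_zero hA
      (by rw [← hφ, eMul_single_single_of_ne A hij, map_zero])
  obtain ⟨σ, hσ⟩ := Set.exists_perm_eq_singleton_of_pairwise_disjoint _ hne hdisj
  have hsupp : ∀ i j, φ (Pi.single i 1) j ≠ 0 ↔ j = σ i := fun i j =>
    Set.ext_iff.1 (hσ i) j
  refine ⟨⟨fun i => ⟨σ i, (hsupp i _).2 rfl, fun j => (hsupp i j).1⟩,
    fun j => ⟨σ.symm j, (hsupp _ j).2 (σ.apply_symm_apply j).symm,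
      fun i hi => (σ.symm_apply_eq.2 ((hsupp i j).1 hi)).symm⟩⟩,
    σ, fun i => φ (Pi.single i 1) (σ i), fun i => (hsupp i _).2 rfl, fun i j => ?_⟩
  split_ifs with h
  · rw [h]
  · exact not_not.1 (mt (hsupp i j).1 h)
end

section
/- Let E be the n-dimensional evolution algebra whose structure matrix is a single Jordan cell with non-zero eigenvalue λ (so e_i·e_i = λe_i + e_{i+1} for i < n and e_n·e_n = λe_n). Then E^k = E^{(k)} = E^{<k>} = E for all k ≥ 1; in particular E is neither solvable, nor right nilpotent, nor nilpotent. -/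
lemma row_mem_sMul {n : ℕ} (A : Matrix (Fin n) (Fin n) ℂ) (i : Fin n) :
    (A i : Fin n → ℂ) ∈ sMul A ⊤ ⊤ := by
  apply Submodule.subset_span
  refine ⟨Pi.single i 1, trivial, Pi.single i 1, trivial, ?_⟩
  funext k
  simp [eMul, Pi.single_apply, ite_mul, Finset.sum_ite_eq']

lemma sMul_top_top {n : ℕ} (A : Matrix (Fin n) (Fin n) ℂ) (hdet : IsUnit A.det) :
    sMul A ⊤ ⊤ = ⊤ := by
  apply top_unique
  intro v _
  have hv : v = Matrix.vecMul (Matrix.vecMul v A⁻¹) A := by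
    rw [Matrix.vecMul_vecMul, Matrix.nonsing_inv_mul A hdet, Matrix.vecMul_one]
  rw [hv]
  have h2 : Matrix.vecMul (Matrix.vecMul v A⁻¹) A
      = ∑ i, (Matrix.vecMul v A⁻¹) i • A i := by
    funext k
    simp [Matrix.vecMul, dotProduct, Finset.sum_apply]
  rw [h2]
  exact Submodule.sum_mem _ fun i _ => Submodule.smul_mem _ _ (row_mem_sMul A i)

/-- for the evolution algebra whose structure matrix is a single
Jordan cell with non-zero eigenvalue `λ`, all powers `Eᵏ`, `E⁽ᵏ⁾`, `E^{<k>}`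
equal `E`; in particular `E` is neither solvable, nor right nilpotent, nor
nilpotent. -/
theorem jordan_cell_nonzero_eigenvalue {n : ℕ} (hn : 1 ≤ n) (lam : ℂ) (hlam : lam ≠ 0)
    (A : Matrix (Fin n) (Fin n) ℂ)
    (hA : ∀ i j : Fin n, A i j = if j = i then lam else if (j : ℕ) = (i : ℕ) + 1 then 1 else 0) :
    (∀ k : ℕ, 1 ≤ k → pPow A k = ⊤ ∧ dPow A k = ⊤ ∧ rPow A k = ⊤) ∧
    (¬ ∃ m : ℕ, 1 ≤ m ∧ dPow A m = ⊥) ∧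
    (¬ ∃ m : ℕ, 1 ≤ m ∧ rPow A m = ⊥) ∧
    (¬ ∃ m : ℕ, 1 ≤ m ∧ pPow A m = ⊥) := by
  have hupper : A.BlockTriangular id := by
    intro i j hij
    rw [hA]
    have h1 : ¬ (j = i) := fun h => by simp [h] at hij
    have h2 : ¬ ((j : ℕ) = (i : ℕ) + 1) := by
      simp only [id] at hij; omega
    simp [h1, h2]
  have hdet : IsUnit A.det := by
    rw [Matrix.det_of_upperTriangular hupper]
    have : ∀ i : Fin n, A i i = lam := fun i => by simp [hA]
    simp only [this, Finset.prod_const]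
    exact (isUnit_iff_ne_zero.mpr hlam).pow _
  have hsmul : sMul A ⊤ ⊤ = ⊤ := sMul_top_top A hdet
  have hmono : ∀ S T : Submodule ℂ (Fin n → ℂ), S = ⊤ → T = ⊤ → sMul A S T = ⊤ := by
    rintro S T rfl rfl; exact hsmul
  have hd : ∀ k, 1 ≤ k → dPow A k = ⊤ := by
    intro k hk
    induction k with
    | zero => omega
    | succ m ih =>
      match m, ih with
      | 0, _ => rfl
      | (m+1), ih => exact hmono _ _ (ih (by omega)) (ih (by omega))
  have hr : ∀ k, 1 ≤ k → rPow A k = ⊤ := by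
    intro k hk
    induction k with
    | zero => omega
    | succ m ih =>
      match m, ih with
      | 0, _ => rfl
      | (m+1), ih => exact hmono _ _ (ih (by omega)) rfl
  have hp : ∀ k, 1 ≤ k → pPow A k = ⊤ := by
    intro k
    induction k using Nat.strong_induction_on with
    | _ k ih =>
      match k with
      | 0 => omega
      | 1 => intro _; rw [pPow]
      | (m+2) =>
        intro _
        rw [pPow]
        apply top_unique
        refine le_trans ?_ (le_iSup _ (⟨0, by omega⟩ : Fin (m+1)))
        rw [hmono _ _ (ih 1 (by omega) (by omega)) (ih (m+1-0) (by omega) (by omega))]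
  have hnt : Nontrivial (Fin n → ℂ) := by
    haveI : NeZero n := ⟨by omega⟩
    infer_instance
  refine ⟨fun k hk => ⟨hp k hk, hd k hk, hr k hk⟩, ?_, ?_, ?_⟩
  · rintro ⟨m, hm, h⟩; rw [hd m hm] at h; exact top_ne_bot h
  · rintro ⟨m, hm, h⟩; rw [hr m hm] at h; exact top_ne_bot h
  · rintro ⟨m, hm, h⟩; rw [hp m hm] at h; exact top_ne_bot h
end

section
/- Let E be the n-dimensional evolution algebra with e_i·e_i = e_{i+1} for 1 ≤ i ≤ n-1 and e_n·e_n = 0. Then E^{(k)} = span{e_k,...,e_n} for 2 ≤ k ≤ n, E^{(n+1)} = 0, and E is solvable of solvability index exactly n+1. -/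
noncomputable def Tk (n k : ℕ) : Submodule ℂ (Fin n → ℂ) where
  carrier := {x | ∀ j : Fin n, (j : ℕ) + 1 < k → x j = 0}
  add_mem' := fun ha hb j hj => by simp [ha j hj, hb j hj]
  zero_mem' := fun j _ => rfl
  smul_mem' := fun c x hx j hj => by simp [hx j hj]

lemma mem_Tk {n k : ℕ} {x : Fin n → ℂ} : x ∈ Tk n k ↔ ∀ j : Fin n, (j : ℕ) + 1 < k → x j = 0 :=
  Iff.rfl

lemma span_singles (n k : ℕ) :
    Submodule.span ℂ {v : Fin n → ℂ | ∃ j : Fin n, k ≤ (j : ℕ) + 1 ∧ v = Pi.single j (1 : ℂ)}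
      = Tk n k := by
  apply le_antisymm
  · rw [Submodule.span_le]
    rintro v ⟨j, hj, rfl⟩ j' hj'
    exact Pi.single_eq_of_ne (by intro h; rw [h] at hj'; omega) 1
  · intro x hx
    have hxe : x = ∑ j : Fin n, x j • (Pi.single j 1 : Fin n → ℂ) := by
      ext i
      simp [Pi.single_apply, Finset.sum_ite_eq]
    rw [hxe]
    refine Submodule.sum_mem _ fun j _ => ?_
    by_cases h : k ≤ (j : ℕ) + 1
    · exact Submodule.smul_mem _ _ (Submodule.subset_span ⟨j, h, rfl⟩)
    · rw [hx j (by omega)]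
      simp

lemma eMul_single {n : ℕ} (A : Matrix (Fin n) (Fin n) ℂ)
    (hA : ∀ i j : Fin n, A i j = if (j : ℕ) = (i : ℕ) + 1 then 1 else 0) (p : Fin n) :
    eMul A (Pi.single p 1) (Pi.single p 1) = fun k : Fin n => if (k : ℕ) = (p : ℕ) + 1 then 1 else 0 := by
  funext k
  unfold eMul
  rw [Finset.sum_eq_single p]
  · simp [hA]
  · intro q _ hq
    simp [Pi.single_eq_of_ne hq]
  · simp

lemma sMul_Tk {n : ℕ} (A : Matrix (Fin n) (Fin n) ℂ)
    (hA : ∀ i j : Fin n, A i j = if (j : ℕ) = (i : ℕ) + 1 then 1 else 0)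
    (k : ℕ) (hk : 1 ≤ k) : sMul A (Tk n k) (Tk n k) = Tk n (k + 1) := by
  apply le_antisymm
  · rw [sMul, Submodule.span_le]
    rintro z ⟨x, hx, y, hy, rfl⟩ j hj
    show (∑ p, x p * y p * A p j) = 0
    refine Finset.sum_eq_zero fun p _ => ?_
    rw [hA]
    by_cases h : (j : ℕ) = (p : ℕ) + 1
    · rw [hx p (by omega)]; ring
    · simp [h]
  · rw [← span_singles n (k + 1), Submodule.span_le]
    rintro v ⟨m, hm, rfl⟩
    have hm1 : 1 ≤ (m : ℕ) := by omega
    set p : Fin n := ⟨(m : ℕ) - 1, by omega⟩ with hp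
    have hpm : (p : ℕ) + 1 = (m : ℕ) := by simp [hp]; omega
    have hsingle : Pi.single m (1 : ℂ) = eMul A (Pi.single p 1) (Pi.single p 1) := by
      rw [eMul_single A hA p]
      funext j
      rw [Pi.single_apply]
      by_cases h : j = m
      · simp [h, hpm]
      · rw [if_neg h, if_neg (by rw [hpm]; exact fun hc => h (Fin.ext hc))]
    have hpmem : Pi.single p (1 : ℂ) ∈ Tk n k := by
      intro j hj
      exact Pi.single_eq_of_ne (by intro h; rw [h] at hj; simp [hp] at hj; omega) 1
    exact Submodule.subset_span ⟨_, hpmem, _, hpmem, hsingle⟩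

lemma dPow_succ_eq {n : ℕ} (A : Matrix (Fin n) (Fin n) ℂ)
    (hA : ∀ i j : Fin n, A i j = if (j : ℕ) = (i : ℕ) + 1 then 1 else 0) :
    ∀ k : ℕ, dPow A (k + 1) = Tk n (k + 1) := by
  intro k
  induction k with
  | zero =>
    apply le_antisymm
    · intro x _ j hj; omega
    · exact le_top
  | succ k ih =>
    show sMul A (dPow A (k+1)) (dPow A (k+1)) = _
    rw [ih, sMul_Tk A hA (k+1) (by omega)]

/-- for the evolution algebra with `eᵢ·eᵢ = e_{i+1}` (`i < n`) and
`eₙ·eₙ = 0` (a Jordan cell with eigenvalue 0), `E⁽ᵏ⁾ = span{e_k,…,e_n}` for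
`2 ≤ k ≤ n`, `E⁽ⁿ⁺¹⁾ = 0`, and the solvability index is exactly `n+1`. -/
theorem jordan_cell_solvable {n : ℕ} (hn : 1 ≤ n)
    (A : Matrix (Fin n) (Fin n) ℂ)
    (hA : ∀ i j : Fin n, A i j = if (j : ℕ) = (i : ℕ) + 1 then 1 else 0) :
    (∀ k : ℕ, 2 ≤ k → k ≤ n →
      dPow A k = Submodule.span ℂ {v | ∃ j : Fin n, k ≤ (j : ℕ) + 1 ∧ v = Pi.single j (1 : ℂ)}) ∧
    dPow A (n + 1) = ⊥ ∧
    (∀ m : ℕ, 1 ≤ m → m < n + 1 → dPow A m ≠ ⊥) := by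
  refine ⟨?_, ?_, ?_⟩
  · intro k hk2 _
    obtain ⟨k', rfl⟩ : ∃ k', k = k' + 1 := ⟨k - 1, by omega⟩
    rw [dPow_succ_eq A hA, span_singles]
  · rw [show n + 1 = n + 1 from rfl, dPow_succ_eq A hA n]
    rw [Submodule.eq_bot_iff]
    intro x hx
    funext j
    exact hx j (by omega)
  · intro m hm1 hmn h
    obtain ⟨m', rfl⟩ : ∃ m', m = m' + 1 := ⟨m - 1, by omega⟩
    rw [dPow_succ_eq A hA] at h
    have hmem : (Pi.single ⟨n - 1, by omega⟩ 1 : Fin n → ℂ) ∈ Tk n (m' + 1) := by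
      intro j hj
      exact Pi.single_eq_of_ne (by intro hc; rw [hc] at hj; simp at hj; omega) 1
    rw [h] at hmem
    have := Submodule.mem_bot (R := ℂ) |>.mp hmem
    have h1 := congrFun this ⟨n - 1, by omega⟩
    simp at h1
end

section
/- Let E be the n-dimensional evolution algebra with e_i·e_i = e_{i+1} for 1 ≤ i ≤ n-1 and e_n·e_n = 0. Then for all 0 ≤ k ≤ n-2 one has E^{2^k+1} = E^{2^k+2} = ⋯ = E^{2^{k+1}} = span{e_{k+2},...,e_n}; consequently E^{2^{n-1}} = span{e_n}, E^{2^{n-1}+1} = 0, and E is nilpotent of nilpotency index exactly 2^{n-1}+1. -/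
/-!
Let `V t` be the span of the basis vectors `e_j` with (0-based) index `j ≥ t`. Since
`eᵢ · eᵢ = e_{i+1}`, a product of a vector of `V a` with one of `V b` only involves the `e_{i+1}`
with `i ≥ max a b`, so `V a · V b = V (max a b + 1)`. By strong induction `Eᵐ = V ⌈log₂ m⌉`:
the summand `Eⁱ E^{m-i}` is `V (max ⌈log₂ i⌉ ⌈log₂ (m-i)⌉ + 1)`, the balanced split
`i = ⌈m/2⌉` gives exactly `V ⌈log₂ m⌉`, and the other splits give subspaces of it because
`⌈log₂ (a+b)⌉ ≤ max ⌈log₂ a⌉ ⌈log₂ b⌉ + 1`.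
-/

namespace Nat

theorem clog_two_add_le (a b : ℕ) : clog 2 (a + b) ≤ max (clog 2 a) (clog 2 b) + 1 := by
  rw [clog_le_iff_le_pow one_lt_two, pow_succ, mul_two]
  exact add_le_add
    ((le_pow_clog one_lt_two a).trans (pow_le_pow_right₀ one_le_two (le_max_left _ _)))
    ((le_pow_clog one_lt_two b).trans (pow_le_pow_right₀ one_le_two (le_max_right _ _)))

theorem clog_two_eq_max_half_succ {m : ℕ} (hm : 2 ≤ m) :
    clog 2 m = max (clog 2 ((m + 1) / 2)) (clog 2 (m / 2)) + 1 := by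
  rw [max_eq_left (clog_mono_right 2 (by omega)), clog_of_two_le one_lt_two hm,
    show m + 2 - 1 = m + 1 by omega]

theorem clog_eq_succ_of_pow_lt_of_le {b k m : ℕ} (hb : 1 < b) (h₁ : b ^ k < m)
    (h₂ : m ≤ b ^ (k + 1)) : clog b m = k + 1 :=
  le_antisymm ((clog_le_iff_le_pow hb).2 h₂) ((lt_clog_iff_pow_lt hb).2 h₁)

end Nat

open Submodule

section VanishBelow

variable (R : Type*) [Semiring R] (n : ℕ)

/-- In the paper's 1-based notation this is `span {e_{t+1}, …, eₙ}`. -/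
def vanishBelow (t : ℕ) : Submodule R (Fin n → R) :=
  Submodule.pi {k | (k : ℕ) < t} fun _ => ⊥

variable {R n}

theorem mem_vanishBelow {t : ℕ} {x : Fin n → R} :
    x ∈ vanishBelow R n t ↔ ∀ k : Fin n, (k : ℕ) < t → x k = 0 := by
  simp [vanishBelow, Submodule.mem_pi]

variable (R n)

theorem vanishBelow_zero : vanishBelow R n 0 = ⊤ :=
  eq_top_iff.2 fun _ _ => mem_vanishBelow.2 fun _ hk => absurd hk (Nat.not_lt_zero _)

theorem vanishBelow_antitone : Antitone (vanishBelow R n) :=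
  fun _ _ hst _ hx => mem_vanishBelow.2 fun k hk => mem_vanishBelow.1 hx k (hk.trans_le hst)

variable {R n}

theorem single_mem_vanishBelow {t : ℕ} {j : Fin n} (hj : t ≤ j) (c : R) :
    Pi.single j c ∈ vanishBelow R n t := by
  refine mem_vanishBelow.2 fun k hk => ?_
  have hkj : k ≠ j := by rintro rfl; omega
  exact Pi.single_eq_of_ne (M := fun _ => R) hkj c

theorem vanishBelow_eq_bot {t : ℕ} (ht : n ≤ t) : vanishBelow R n t = ⊥ :=
  eq_bot_iff.2 fun _ hx =>
    (mem_bot R).2 (funext fun k => mem_vanishBelow.1 hx k (k.isLt.trans_le ht))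

theorem vanishBelow_ne_bot [Nontrivial R] {t : ℕ} (ht : t < n) : vanishBelow R n t ≠ ⊥ := by
  intro h
  have := single_mem_vanishBelow (R := R) (j := ⟨t, ht⟩) le_rfl (1 : R)
  rw [h, mem_bot] at this
  exact one_ne_zero (by simpa using congrFun this ⟨t, ht⟩ : (1 : R) = 0)

theorem span_single_eq_vanishBelow (t : ℕ) :
    span R {v | ∃ j : Fin n, t ≤ (j : ℕ) ∧ v = Pi.single j (1 : R)} = vanishBelow R n t := by
  refine le_antisymm (span_le.2 ?_) fun x hx => ?_
  · rintro v ⟨j, hj, rfl⟩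
    exact single_mem_vanishBelow hj 1
  · rw [← Finset.univ_sum_single x]
    refine sum_mem fun j _ => ?_
    by_cases hj : t ≤ (j : ℕ)
    · have hsmul : Pi.single j (x j) = x j • Pi.single j (1 : R) := by
        rw [← Pi.single_smul', smul_eq_mul, mul_one]
      exact hsmul ▸ smul_mem _ _ (subset_span ⟨j, hj, rfl⟩)
    · rw [mem_vanishBelow.1 hx j (by omega), Pi.single_zero]
      exact zero_mem _

theorem vanishBelow_eq_span_single_of_succ_eq {j : Fin n} (hj : (j : ℕ) + 1 = n) :
    vanishBelow R n j = span R {Pi.single j (1 : R)} := by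
  rw [← span_single_eq_vanishBelow]
  congr 1
  ext v
  constructor
  · rintro ⟨i, hi, rfl⟩
    rw [show i = j from Fin.ext (by omega)]
    rfl
  · rintro rfl
    exact ⟨j, le_rfl, rfl⟩

end VanishBelow

theorem eMul_single_one_self {n : ℕ} (A : Matrix (Fin n) (Fin n) ℂ) (i : Fin n) :
    eMul A (Pi.single i 1) (Pi.single i 1) = A i := by
  funext k
  rw [eMul, Finset.sum_eq_single i (fun p _ hp => by simp [hp]) (by simp)]
  simp

theorem pPow_eq_of_sMul_eq {n : ℕ} (A : Matrix (Fin n) (Fin n) ℂ)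
    (V : ℕ → Submodule ℂ (Fin n → ℂ)) (hV : Antitone V) (hV0 : V 0 = ⊤)
    (hmul : ∀ a b, sMul A (V a) (V b) = V (max a b + 1)) :
    ∀ m, 1 ≤ m → pPow A m = V (Nat.clog 2 m) := by
  intro m hm
  induction m using Nat.strong_induction_on with
  | _ m ih =>
  match m, hm with
  | 1, _ => rw [Nat.clog_one_right, hV0, pPow]
  | k + 2, _ =>
    have hterm : ∀ i : Fin (k + 1), sMul A (pPow A (i.1 + 1)) (pPow A (k + 1 - i.1)) =
        V (max (Nat.clog 2 (i.1 + 1)) (Nat.clog 2 (k + 1 - i.1)) + 1) := fun i => by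
      rw [ih _ (by omega) (by omega), ih _ (by omega) (by omega), hmul]
    rw [pPow]
    simp only [hterm]
    refine le_antisymm (iSup_le fun i => hV ?_) ?_
    · simpa [show i.1 + 1 + (k + 1 - i.1) = k + 2 by omega] using
        Nat.clog_two_add_le (i.1 + 1) (k + 1 - i.1)
    -- the balanced split `k + 2 = ⌈(k + 2) / 2⌉ + ⌊(k + 2) / 2⌋`
    · refine le_of_eq_of_le ?_ (le_iSup _ (⟨(k + 3) / 2 - 1, by omega⟩ : Fin (k + 1)))
      rw [Nat.clog_two_eq_max_half_succ (by omega : 2 ≤ k + 2)]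
      congr 4 <;> dsimp only <;> omega

theorem sMul_vanishBelow {n : ℕ} {A : Matrix (Fin n) (Fin n) ℂ}
    (hA : ∀ i j : Fin n, A i j = if (j : ℕ) = (i : ℕ) + 1 then 1 else 0) (a b : ℕ) :
    sMul A (vanishBelow ℂ n a) (vanishBelow ℂ n b) = vanishBelow ℂ n (max a b + 1) := by
  refine le_antisymm (span_le.2 ?_) ?_
  · rintro z ⟨x, hx, y, hy, rfl⟩
    refine mem_vanishBelow.2 fun k hk => Finset.sum_eq_zero fun p _ => ?_
    rw [hA]
    split_ifs with hkp
    · rcases lt_max_iff.1 (by omega : (p : ℕ) < max a b) with h | h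
      · simp [mem_vanishBelow.1 hx p h]
      · simp [mem_vanishBelow.1 hy p h]
    · simp
  · rw [← span_single_eq_vanishBelow, span_le]
    rintro v ⟨j, hj, rfl⟩
    let i : Fin n := ⟨j - 1, by omega⟩
    have hrow : A i = Pi.single j 1 := by
      funext k
      simp only [hA, Pi.single_apply, Fin.ext_iff, i, Nat.sub_add_cancel (by omega : 1 ≤ (j : ℕ))]
    rw [← hrow, ← eMul_single_one_self A i]
    exact subset_span ⟨_, single_mem_vanishBelow (by dsimp only [i]; omega) 1,
      _, single_mem_vanishBelow (by dsimp only [i]; omega) 1, rfl⟩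

/-- for the evolution algebra with `eᵢ·eᵢ = e_{i+1}` (`i < n`) and
`eₙ·eₙ = 0`, one has `E^{2ᵏ+1} = ⋯ = E^{2ᵏ⁺¹} = span{e_{k+2},…,e_n}` for
`0 ≤ k ≤ n-2`; consequently `E^{2ⁿ⁻¹} = span{e_n}`, `E^{2ⁿ⁻¹+1} = 0`, and the
nilpotency index is exactly `2ⁿ⁻¹ + 1`. -/
theorem jordan_cell_nilpotency_index {n : ℕ} (hn : 1 ≤ n)
    (A : Matrix (Fin n) (Fin n) ℂ)
    (hA : ∀ i j : Fin n, A i j = if (j : ℕ) = (i : ℕ) + 1 then 1 else 0) :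
    (∀ k : ℕ, k ≤ n - 2 → ∀ m : ℕ, 2 ^ k + 1 ≤ m → m ≤ 2 ^ (k + 1) →
      pPow A m =
        Submodule.span ℂ {v | ∃ j : Fin n, k + 1 ≤ (j : ℕ) ∧ v = Pi.single j (1 : ℂ)}) ∧
    pPow A (2 ^ (n - 1)) = Submodule.span ℂ {Pi.single (⟨n - 1, by omega⟩ : Fin n) (1 : ℂ)} ∧
    pPow A (2 ^ (n - 1) + 1) = ⊥ ∧
    (∀ m : ℕ, 1 ≤ m → m < 2 ^ (n - 1) + 1 → pPow A m ≠ ⊥) := by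
  have hpPow : ∀ m, 1 ≤ m → pPow A m = vanishBelow ℂ n (Nat.clog 2 m) :=
    pPow_eq_of_sMul_eq A _ (vanishBelow_antitone ℂ n) (vanishBelow_zero ℂ n) (sMul_vanishBelow hA)
  have hpow : 2 ^ (n - 1 + 1) = 2 * 2 ^ (n - 1) := by rw [pow_succ, mul_comm]
  have hpos : 1 ≤ 2 ^ (n - 1) := Nat.one_le_two_pow
  refine ⟨fun k _ m hm₁ hm₂ => ?_, ?_, ?_, fun m hm₁ hm₂ => ?_⟩
  · rw [hpPow m (by omega), Nat.clog_eq_succ_of_pow_lt_of_le one_lt_two (by omega) hm₂,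
      span_single_eq_vanishBelow]
  · rw [hpPow _ hpos, Nat.clog_pow 2 _ one_lt_two]
    exact vanishBelow_eq_span_single_of_succ_eq (j := ⟨n - 1, by omega⟩) (Nat.sub_add_cancel hn)
  · rw [hpPow _ (by omega),
      Nat.clog_eq_succ_of_pow_lt_of_le (k := n - 1) one_lt_two (by omega) (by omega),
      vanishBelow_eq_bot (by omega)]
  · rw [hpPow m hm₁]
    exact vanishBelow_ne_bot ((Nat.clog_le_of_le_pow (by omega : m ≤ 2 ^ (n - 1))).trans_lt
      (by omega))
end

section
/- Let E be a nilpotent n-dimensional complex evolution algebra whose nilpotency index is not equal to 2^{n-1}+1. Then the nilpotency index of E is at most 2^{n-2}+1. -/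
namespace EvoAux
variable {n : ℕ} (A : Matrix (Fin n) (Fin n) ℂ)

lemma eMul_comm (x y : Fin n → ℂ) : eMul A x y = eMul A y x := by
  funext k; unfold eMul; exact Finset.sum_congr rfl (fun p _ => by ring)

lemma eMul_mem_sMul {S T : Submodule ℂ (Fin n → ℂ)} {x y : Fin n → ℂ}
    (hx : x ∈ S) (hy : y ∈ T) : eMul A x y ∈ sMul A S T :=
  Submodule.subset_span ⟨x, hx, y, hy, rfl⟩

lemma sMul_le {S T U : Submodule ℂ (Fin n → ℂ)}
    (h : ∀ x ∈ S, ∀ y ∈ T, eMul A x y ∈ U) : sMul A S T ≤ U := by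
  rw [sMul, Submodule.span_le]
  rintro z ⟨x, hx, y, hy, rfl⟩
  exact h x hx y hy

lemma sMul_mono {S S' T T' : Submodule ℂ (Fin n → ℂ)} (h1 : S ≤ S') (h2 : T ≤ T') :
    sMul A S T ≤ sMul A S' T' :=
  sMul_le A (fun x hx y hy => eMul_mem_sMul A (h1 hx) (h2 hy))

lemma sMul_comm (S T : Submodule ℂ (Fin n → ℂ)) : sMul A S T = sMul A T S := by
  have h : ∀ S T : Submodule ℂ (Fin n → ℂ), sMul A S T ≤ sMul A T S := by
    intro S T
    exact sMul_le A (fun x hx y hy => (eMul_comm A x y) ▸ eMul_mem_sMul A hy hx)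
  exact le_antisymm (h S T) (h T S)

lemma pPow_one : pPow A 1 = ⊤ := by rw [pPow]

lemma pPow_eq (k : ℕ) :
    pPow A (k+2) = ⨆ i : Fin (k+1), sMul A (pPow A (i.1+1)) (pPow A (k+1-i.1)) := by
  rw [pPow]

/-- `Eᵃ·Eᵇ ≤ E^{a+b}`. -/
lemma sMul_pPow_le {a b : ℕ} (ha : 1 ≤ a) (hb : 1 ≤ b) :
    sMul A (pPow A a) (pPow A b) ≤ pPow A (a + b) := by
  have h2 : a + b = (a + b - 2) + 2 := by omega
  rw [h2, pPow_eq]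
  have hi : a - 1 < (a + b - 2) + 1 := by omega
  have := le_iSup (fun i : Fin (a + b - 2 + 1) =>
    sMul A (pPow A (i.1+1)) (pPow A (a + b - 2 + 1 - i.1))) ⟨a - 1, hi⟩
  simpa [show a - 1 + 1 = a by omega, show a + b - 2 + 1 - (a - 1) = b by omega] using this

/-- monotonicity : `E^{k+1} ≤ Eᵏ` for `k ≥ 1`. -/
lemma pPow_succ_le : ∀ k : ℕ, 1 ≤ k → pPow A (k + 1) ≤ pPow A k := by
  intro k
  induction k using Nat.strong_induction_on with
  | _ k IH =>
    intro hk
    match k, hk with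
    | 1, _ => rw [pPow_one]; exact le_top
    | (k+2), _ =>
      rw [show k+2+1 = (k+1)+2 by ring, pPow_eq]
      apply iSup_le
      rintro ⟨i, hilt⟩
      simp only
      by_cases hik : i ≤ k
      · -- second factor index k+2-i ≥ 2
        have h1 : pPow A (k + 1 + 1 - i) ≤ pPow A (k + 1 - i) := by
          have := IH (k + 1 - i) (by omega) (by omega)
          simpa [show k + 1 - i + 1 = k + 1 + 1 - i by omega] using this
        calc sMul A (pPow A (i+1)) (pPow A (k+1+1-i))
            ≤ sMul A (pPow A (i+1)) (pPow A (k+1-i)) := sMul_mono A le_rfl h1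
          _ ≤ pPow A ((i+1) + (k+1-i)) := sMul_pPow_le A (by omega) (by omega)
          _ = pPow A (k+2) := by congr 1; omega
      · have hik' : i = k + 1 := by omega
        subst hik'
        have h1 : pPow A (k + 1 + 1) ≤ pPow A (k + 1) := IH (k+1) (by omega) (by omega)
        calc sMul A (pPow A (k+1+1)) (pPow A (k+1+1-(k+1)))
            ≤ sMul A (pPow A (k+1)) (pPow A (k+1+1-(k+1))) := sMul_mono A h1 le_rfl
          _ = sMul A (pPow A (k+1)) (pPow A 1) := by congr 2; omega
          _ ≤ pPow A ((k+1) + 1) := sMul_pPow_le A (by omega) le_rfl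
          _ = pPow A (k+2) := by congr 1

lemma pPow_le_pPow {a b : ℕ} (ha : 1 ≤ a) (hab : a ≤ b) : pPow A b ≤ pPow A a := by
  induction b with
  | zero => omega
  | succ b IH =>
    rcases Nat.lt_or_ge a (b+1) with h | h
    · exact le_trans (pPow_succ_le A b (by omega)) (IH (by omega))
    · have : a = b + 1 := by omega
      subst this; exact le_rfl


variable {n : ℕ} (A : Matrix (Fin n) (Fin n) ℂ)

/-- annihilator filtration support sets -/
noncomputable def annS : ℕ → Set (Fin n)
  | 0 => ∅
  | (j+1) => {i | ∀ k, k ∉ annS j → A i k = 0}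

/-- coordinate submodule on `annS A j` -/
noncomputable def NN (j : ℕ) : Submodule ℂ (Fin n → ℂ) where
  carrier := {x | ∀ k, k ∉ annS A j → x k = 0}
  add_mem' := by
    intro x y hx hy k hk
    simp only [Pi.add_apply, hx k hk, hy k hk, add_zero]
  zero_mem' := fun k _ => rfl
  smul_mem' := by
    intro c x hx k hk
    simp only [Pi.smul_apply, hx k hk, smul_zero]

lemma mem_NN {j : ℕ} {x : Fin n → ℂ} : x ∈ NN A j ↔ ∀ k, k ∉ annS A j → x k = 0 := Iff.rfl

lemma NN_zero : NN A 0 = ⊥ := by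
  apply le_antisymm
  · intro x hx
    have : x = 0 := funext (fun k => hx k (by simp [annS]))
    simp [this]
  · exact bot_le

lemma annS_mono : ∀ j, annS A j ⊆ annS A (j+1) := by
  intro j
  induction j with
  | zero => simp [annS]
  | succ j IH =>
    intro i hi k hk
    exact hi k (fun hkj => hk (IH hkj))

lemma annS_le_of_le {j j' : ℕ} (h : j ≤ j') : annS A j ⊆ annS A j' := by
  induction j' with
  | zero => simp [Nat.le_zero.mp h]
  | succ j' IH =>
    rcases Nat.lt_or_ge j (j'+1) with h' | h'
    · exact subset_trans (IH (by omega)) (annS_mono A j')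
    · have : j = j' + 1 := by omega
      subst this; rfl


/-- F1: multiplying `NN (j+1)` by anything lands in `NN j`. -/
lemma sMul_NN_le {S : Submodule ℂ (Fin n → ℂ)} (j : ℕ) :
    sMul A S (NN A (j+1)) ≤ NN A j := by
  apply sMul_le
  intro x _ y hy k hk
  show ∑ p, x p * y p * A p k = 0
  apply Finset.sum_eq_zero
  intro p _
  by_cases hp : p ∈ annS A (j+1)
  · rw [hp k hk, mul_zero]
  · rw [mem_NN] at hy
    rw [hy p hp]
    ring

lemma pPow_two_le_NN {t : ℕ} (h : annS A (t+1) = Set.univ) : pPow A 2 ≤ NN A t := by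
  have h2 : (2 : ℕ) = 0 + 2 := rfl
  rw [h2, pPow_eq]
  apply iSup_le
  intro i
  apply sMul_le
  intro x _ y _ k hk
  show ∑ p, x p * y p * A p k = 0
  apply Finset.sum_eq_zero
  intro p _
  have hp : p ∈ annS A (t+1) := by rw [h]; trivial
  rw [hp k hk, mul_zero]

/-- powers descend the filtration -/
lemma pPow_le_NN : ∀ j t : ℕ, annS A (t + j + 1) = Set.univ → pPow A (2^j + 1) ≤ NN A t := by
  intro j
  induction j with
  | zero =>
    intro t h
    exact pPow_two_le_NN A h
  | succ j IH =>
    intro t h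
    have IH' : pPow A (2^j + 1) ≤ NN A (t+1) := by
      apply IH
      rw [show t + 1 + j + 1 = t + (j+1) + 1 by ring]
      exact h
    have hK : 2^(j+1) + 1 = (2^(j+1) - 1) + 2 := by
      have : 1 ≤ 2^(j+1) := Nat.one_le_two_pow
      omega
    rw [hK, pPow_eq]
    apply iSup_le
    rintro ⟨i, hilt⟩
    simp only
    have h2j : 1 ≤ 2^j := Nat.one_le_two_pow
    have hpow : 2^(j+1) = 2^j + 2^j := by rw [pow_succ]; ring
    by_cases hi : 2^j ≤ i
    · -- first factor is deep
      have h1 : pPow A (i+1) ≤ NN A (t+1) :=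
        le_trans (pPow_le_pPow A (by omega) (by omega)) IH'
      calc sMul A (pPow A (i+1)) (pPow A (2^(j+1) - 1 + 1 - i))
          ≤ sMul A (NN A (t+1)) ⊤ := sMul_mono A h1 le_top
        _ = sMul A ⊤ (NN A (t+1)) := sMul_comm A _ _
        _ ≤ NN A t := sMul_NN_le A t
    · -- second factor is deep : index = 2^(j+1) - i ≥ 2^j + 1
      have h1 : pPow A (2^(j+1) - 1 + 1 - i) ≤ NN A (t+1) := by
        refine le_trans (pPow_le_pPow A (by omega) (by omega)) IH'
      calc sMul A (pPow A (i+1)) (pPow A (2^(j+1) - 1 + 1 - i))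
          ≤ sMul A ⊤ (NN A (t+1)) := sMul_mono A le_top h1
        _ ≤ NN A t := sMul_NN_le A t

lemma mem_annS_succ {j : ℕ} {i : Fin n} :
    i ∈ annS A (j+1) ↔ ∀ k, k ∉ annS A j → A i k = 0 := Iff.rfl

set_option maxHeartbeats 1000000 in
/-- If the filtration stalls before reaching everything, all powers have an
element with a nonzero coordinate outside `annS A j`. -/
lemma exists_nonzero_outside (j : ℕ)
    (hstall : annS A (j+1) ⊆ annS A j) (hnu : annS A j ≠ Set.univ) :
    ∀ s : ℕ, 1 ≤ s → ∃ x ∈ pPow A s, ∃ k, k ∉ annS A j ∧ x k ≠ 0 := by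
  intro s
  induction s with
  | zero => omega
  | succ s IH =>
    intro _
    by_cases hs : 1 ≤ s
    · obtain ⟨x, hxm, k0, hk0, hxk0⟩ := IH hs
      have hk0' : k0 ∉ annS A (j+1) := fun h => hk0 (hstall h)
      have hex : ¬ ∀ k, k ∉ annS A j → A k0 k = 0 := fun h => hk0' (mem_annS_succ A |>.mpr h)
      push_neg at hex
      obtain ⟨k1, hk1, hA⟩ := hex
      refine ⟨eMul A x (Pi.single k0 1), ?_, k1, hk1, ?_⟩
      · have hmem : eMul A x (Pi.single k0 1) ∈ sMul A (pPow A s) (pPow A 1) :=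
          eMul_mem_sMul A hxm (by rw [pPow_one]; trivial)
        exact sMul_pPow_le A hs le_rfl hmem
      · have hval : eMul A x (Pi.single k0 1) k1 = x k0 * A k0 k1 := by
          simp [eMul, Pi.single_apply]
        rw [hval]
        exact mul_ne_zero hxk0 hA
    · have hs0 : s = 0 := by omega
      subst hs0
      obtain ⟨i, hi⟩ : ∃ i, i ∉ annS A j := by
        by_contra hc; push_neg at hc; exact hnu (Set.eq_univ_of_forall hc)
      exact ⟨Pi.single i 1, by rw [pPow_one]; trivial, i, hi, by simp⟩


end EvoAux


set_option maxHeartbeats 2000000 in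
/-- if a nilpotent `n`-dimensional complex evolution algebra has
nilpotency index `m ≠ 2ⁿ⁻¹ + 1`, then `m ≤ 2ⁿ⁻² + 1`. -/
theorem nilpotency_index_gap {n : ℕ}
    (A : Matrix (Fin n) (Fin n) ℂ) (m : ℕ) (hm1 : 1 ≤ m)
    (hbot : pPow A m = ⊥) (hmin : ∀ m' : ℕ, 1 ≤ m' → m' < m → pPow A m' ≠ ⊥)
    (hne : m ≠ 2 ^ (n - 1) + 1) :
    m ≤ 2 ^ (n - 2) + 1 := by
  classical
  open EvoAux in
  rcases Nat.eq_zero_or_pos n with hn0 | hn1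
  · subst hn0
    by_contra hcon
    push_neg at hcon
    refine hmin 1 le_rfl (by omega) ?_
    rw [EvoAux.pPow_one]
    exact Subsingleton.elim _ _
  have hinst : Nonempty (Fin n) := ⟨⟨0, hn1⟩⟩
  have hgrow : ∀ j, EvoAux.annS A j ≠ Set.univ → ¬ (EvoAux.annS A (j+1) ⊆ EvoAux.annS A j) := by
    intro j hju hsub
    obtain ⟨x, hx, k, hk, hxk⟩ := EvoAux.exists_nonzero_outside A j hsub hju m hm1
    rw [hbot, Submodule.mem_bot] at hx
    subst hx
    exact hxk rfl
  have hssub : ∀ j, EvoAux.annS A j ≠ Set.univ → EvoAux.annS A j ⊂ EvoAux.annS A (j+1) := by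
    intro j hju
    rw [Set.ssubset_def]
    exact ⟨EvoAux.annS_mono A j, hgrow j hju⟩
  have hlow : ∀ j, EvoAux.annS A j = Set.univ ∨ j ≤ (EvoAux.annS A j).ncard := by
    intro j
    induction j with
    | zero => exact Or.inr (Nat.zero_le _)
    | succ j IH =>
      by_cases hju : EvoAux.annS A j = Set.univ
      · exact Or.inl (Set.eq_univ_of_univ_subset (hju ▸ EvoAux.annS_mono A j))
      · rcases IH with h | h
        · exact absurd h hju
        · right
          have := Set.ncard_lt_ncard (hssub j hju) (Set.toFinite _)
          omega
  have hncard_univ : (Set.univ : Set (Fin n)).ncard = n := by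
    rw [Set.ncard_univ, Nat.card_eq_fintype_card, Fintype.card_fin]
  have huniv : EvoAux.annS A n = Set.univ := by
    rcases hlow n with h | h
    · exact h
    · exact Set.eq_of_subset_of_ncard_le (Set.subset_univ _)
        (by rw [hncard_univ]; exact h) (Set.toFinite _)
  have hex : ∃ j, EvoAux.annS A j = Set.univ := ⟨n, huniv⟩
  set r := Nat.find hex with hrdef
  have hr : EvoAux.annS A r = Set.univ := Nat.find_spec hex
  have hrn : r ≤ n := Nat.find_le huniv
  have hr1 : 1 ≤ r := by
    rcases Nat.eq_zero_or_pos r with h0 | h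
    · exfalso
      have h1 : EvoAux.annS A 0 = Set.univ := by rw [← h0]; exact hr
      have h2 : EvoAux.annS A 0 = (∅ : Set (Fin n)) := rfl
      rw [h2] at h1
      exact Set.empty_ne_univ h1
    · exact h
  have hbound : pPow A (2^(r-1)+1) = ⊥ := by
    have h1 : EvoAux.annS A (0 + (r-1) + 1) = Set.univ := by
      rw [show 0 + (r-1) + 1 = r by omega]; exact hr
    have h2 := EvoAux.pPow_le_NN A (r-1) 0 h1
    rw [EvoAux.NN_zero] at h2
    exact le_bot_iff.mp h2
  have hmle : m ≤ 2^(r-1)+1 := by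
    by_contra h
    push_neg at h
    exact hmin (2^(r-1)+1) (Nat.succ_le_succ (Nat.zero_le _)) h hbound
  rcases Nat.lt_or_ge r n with hrlt | hrge
  · calc m ≤ 2^(r-1)+1 := hmle
      _ ≤ 2^(n-2)+1 :=
        Nat.add_le_add_right (Nat.pow_le_pow_right (by norm_num) (by omega)) 1
  · have hrn' : r = n := le_antisymm hrn hrge
    exfalso
    have hne_univ : ∀ j, j < n → EvoAux.annS A j ≠ Set.univ := by
      intro j hj
      exact Nat.find_min hex (by omega)
    have hup : ∀ d j, j + d = n → (EvoAux.annS A j).ncard + d ≤ n := by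
      intro d
      induction d with
      | zero =>
        intro j hj
        have h2 := Set.ncard_le_ncard (Set.subset_univ (EvoAux.annS A j)) Set.finite_univ
        rw [hncard_univ] at h2
        omega
      | succ d IH =>
        intro j hj
        have h1 := Set.ncard_lt_ncard (hssub j (hne_univ j (by omega))) (Set.toFinite _)
        have h2 := IH (j+1) (by omega)
        omega
    have hcard : ∀ j, j ≤ n → (EvoAux.annS A j).ncard = j := by
      intro j hj
      have hu := hup (n - j) j (by omega)
      rcases hlow j with h | h
      · have h1 : r ≤ j := Nat.find_le h
        have h2 : j = n := by omega
        subst h2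
        rw [h, hncard_univ]
      · omega
    have hdiff1 : ∀ j, 1 ≤ j → j ≤ n → ((EvoAux.annS A j) \ (EvoAux.annS A (j-1))).ncard = 1 := by
      intro j h1 h2
      rw [Set.ncard_diff (EvoAux.annS_le_of_le A (by omega : j - 1 ≤ j)) (Set.toFinite _),
        hcard j h2, hcard (j-1) (by omega)]
      omega
    have hIex : ∀ j : ℕ, ∃ i : Fin n, 1 ≤ j → j ≤ n →
        (EvoAux.annS A j) \ (EvoAux.annS A (j-1)) = {i} := by
      intro j
      by_cases h : 1 ≤ j ∧ j ≤ n
      · obtain ⟨i, hi⟩ := Set.ncard_eq_one.mp (hdiff1 j h.1 h.2)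
        exact ⟨i, fun _ _ => hi⟩
      · exact ⟨⟨0, hn1⟩, fun h1 h2 => absurd ⟨h1, h2⟩ h⟩
    choose I hI using hIex
    have hsurv : ∀ j, j ≤ n - 1 → ∃ x, x ∈ pPow A (2^j) ∧ x (I (n-j)) ≠ 0 ∧
        (∀ k, k ∉ EvoAux.annS A (n-j) → x k = 0) := by
      intro j
      induction j with
      | zero =>
        intro _
        refine ⟨Pi.single (I n) 1, ?_, by simp, ?_⟩
        · rw [pow_zero, EvoAux.pPow_one]; trivial
        · intro k hk
          exfalso
          apply hk
          rw [show n - 0 = n from rfl, huniv]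
          trivial
      | succ j IH =>
        intro hj1
        obtain ⟨x, hxm, hxne, hxsupp⟩ := IH (by omega)
        have ha2 : 2 ≤ n - j := by omega
        set a := n - j with hadef
        set b := n - (j+1) with hbdef
        have hab : b + 1 = a := by omega
        have hb1 : 1 ≤ b := by omega
        have hIa : (EvoAux.annS A a) \ (EvoAux.annS A (a-1)) = {I a} := hI a (by omega) (by omega)
        have hIb : (EvoAux.annS A b) \ (EvoAux.annS A (b-1)) = {I b} := hI b (by omega) (by omega)
        have hIa_mem : I a ∈ EvoAux.annS A a ∧ I a ∉ EvoAux.annS A (a-1) := by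
          have h1 : I a ∈ (EvoAux.annS A a) \ (EvoAux.annS A (a-1)) := by rw [hIa]; rfl
          exact ⟨h1.1, h1.2⟩
        have hIb_mem : I b ∈ EvoAux.annS A b ∧ I b ∉ EvoAux.annS A (b-1) := by
          have h1 : I b ∈ (EvoAux.annS A b) \ (EvoAux.annS A (b-1)) := by rw [hIb]; rfl
          exact ⟨h1.1, h1.2⟩
        have hrowa : ∀ k, k ∉ EvoAux.annS A b → A (I a) k = 0 := by
          have h1 : I a ∈ EvoAux.annS A (b+1) := by rw [hab]; exact hIa_mem.1
          exact (EvoAux.mem_annS_succ A).mp h1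
        have hkey : A (I a) (I b) ≠ 0 := by
          have hnot : ¬ ∀ k, k ∉ EvoAux.annS A (b-1) → A (I a) k = 0 := by
            intro hall
            apply hIa_mem.2
            rw [show a - 1 = (b-1) + 1 by omega]
            exact (EvoAux.mem_annS_succ A).mpr hall
          push_neg at hnot
          obtain ⟨k, hk, hAk⟩ := hnot
          have hkb : k ∈ EvoAux.annS A b := by
            by_contra hkb
            exact hAk (hrowa k hkb)
          have hks : k ∈ (EvoAux.annS A b) \ (EvoAux.annS A (b-1)) := ⟨hkb, hk⟩
          rw [hIb, Set.mem_singleton_iff] at hks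
          rwa [hks] at hAk
        have hrow0 : ∀ p, p ∈ EvoAux.annS A b → A p (I b) = 0 := by
          intro p hp
          have h1 : p ∈ EvoAux.annS A ((b-1)+1) := by rwa [show (b-1)+1 = b by omega]
          exact (EvoAux.mem_annS_succ A).mp h1 (I b) hIb_mem.2
        refine ⟨eMul A x x, ?_, ?_, ?_⟩
        · have hmem : eMul A x x ∈ sMul A (pPow A (2^j)) (pPow A (2^j)) :=
            EvoAux.eMul_mem_sMul A hxm hxm
          have h1 := EvoAux.sMul_pPow_le A (Nat.one_le_two_pow) (Nat.one_le_two_pow) hmem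
          rwa [show 2^j + 2^j = 2^(j+1) by rw [pow_succ]; ring] at h1
        · show eMul A x x (I b) ≠ 0
          have hval : (∑ p, x p * x p * A p (I b)) = x (I a) * x (I a) * A (I a) (I b) := by
            apply Finset.sum_eq_single (I a)
            · intro p _ hp
              by_cases hxp : x p = 0
              · rw [hxp]; ring
              · have hpa : p ∈ EvoAux.annS A a := by
                  by_contra hpa
                  exact hxp (hxsupp p hpa)
                have hpb : p ∈ EvoAux.annS A b := by
                  by_contra hpb
                  have hps : p ∈ (EvoAux.annS A a) \ (EvoAux.annS A (a-1)) :=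
                    ⟨hpa, by rwa [show a - 1 = b by omega]⟩
                  rw [hIa, Set.mem_singleton_iff] at hps
                  exact hp hps
                rw [hrow0 p hpb]; ring
            · intro h; exact absurd (Finset.mem_univ _) h
          show (∑ p, x p * x p * A p (I b)) ≠ 0
          rw [hval]
          exact mul_ne_zero (mul_ne_zero hxne hxne) hkey
        · intro k hk
          show (∑ p, x p * x p * A p k) = 0
          apply Finset.sum_eq_zero
          intro p _
          by_cases hxp : x p = 0
          · rw [hxp]; ring
          · have hpa : p ∈ EvoAux.annS A a := by
              by_contra hpa
              exact hxp (hxsupp p hpa)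
            have h1 : p ∈ EvoAux.annS A (b+1) := by rwa [hab]
            rw [(EvoAux.mem_annS_succ A).mp h1 k hk]
            ring
    obtain ⟨x, hxm, hxne, -⟩ := hsurv (n-1) le_rfl
    have hlt : 2^(n-1) < m := by
      by_contra h
      push_neg at h
      have h1 := EvoAux.pPow_le_pPow A hm1 h
      rw [hbot] at h1
      have hx0 : x = 0 := (Submodule.mem_bot ℂ).mp (h1 hxm)
      exact hxne (by rw [hx0]; rfl)
    have hmeq : m = 2^(n-1)+1 := by
      have h1 : 2^(r-1) = 2^(n-1) := by rw [hrn']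
      omega
    exact hne hmeq
end

section
/- For 4 ≤ k ≤ n, let E_k be the n-dimensional evolution algebra with e_1·e_1 = e_2 + e_3 + ⋯ + e_k, e_2·e_2 = -e_4, e_i·e_i = e_{i+1} for 3 ≤ i ≤ k-1, and e_i·e_i = 0 for i ≥ k. Then E_k^{3·2^i} = span{e_{4+i},...,e_k} for 0 ≤ i ≤ k-4, and the nilpotency index of E_k is exactly 1 + 3·2^{k-4}. -/
section Products

variable {n : ℕ} (A : Matrix (Fin n) (Fin n) ℂ)

lemma eMul_apply (x y : Fin n → ℂ) (r : Fin n) :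
    eMul A x y r = ∑ p, x p * y p * A p r := rfl

lemma eMul_comm (x y : Fin n → ℂ) :
    eMul A x y = eMul A y x := by
  funext r
  exact Finset.sum_congr rfl fun p _ => by ring

lemma eMul_single_one_left (j : Fin n) (y : Fin n → ℂ) :
    eMul A (Pi.single j 1) y = y j • A j := by
  funext r
  rw [eMul_apply, Fintype.sum_eq_single j fun p hp => by simp [Pi.single_eq_of_ne hp]]
  simp

lemma sMul_comm (S T : Submodule ℂ (Fin n → ℂ)) : sMul A S T = sMul A T S := by
  unfold sMul
  congr 1
  ext z
  constructor <;> rintro ⟨x, hx, y, hy, rfl⟩ <;> exact ⟨y, hy, x, hx, eMul_comm A x y⟩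

lemma sMul_mono {S T S' T' : Submodule ℂ (Fin n → ℂ)} (hS : S ≤ S') (hT : T ≤ T') :
    sMul A S T ≤ sMul A S' T' :=
  Submodule.span_mono fun _ ⟨x, hx, y, hy, h⟩ => ⟨x, hS hx, y, hT hy, h⟩

lemma eMul_mem_sMul {S T : Submodule ℂ (Fin n → ℂ)} {x y : Fin n → ℂ} (hx : x ∈ S) (hy : y ∈ T) :
    eMul A x y ∈ sMul A S T :=
  Submodule.subset_span ⟨x, hx, y, hy, rfl⟩

lemma pPow_one : pPow A 1 = ⊤ := by
  rw [pPow]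

lemma pPow_add_two (m : ℕ) :
    pPow A (m + 2) = ⨆ i : Fin (m + 1), sMul A (pPow A (i.1 + 1)) (pPow A (m + 1 - i.1)) := by
  rw [pPow]

lemma sMul_pPow_le_pPow {a b : ℕ} (ha : 0 < a) (hb : 0 < b) :
    sMul A (pPow A a) (pPow A b) ≤ pPow A (a + b) := by
  obtain ⟨a, rfl⟩ := Nat.exists_eq_add_of_lt ha
  obtain ⟨b, rfl⟩ := Nat.exists_eq_add_of_lt hb
  rw [show 0 + a + 1 + (0 + b + 1) = a + b + 2 by omega, pPow_add_two]
  refine le_iSup_of_le ⟨a, by omega⟩ ?_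
  rw [show a + b + 1 - a = 0 + b + 1 by omega, zero_add]

lemma eMul_mem_pPow {a b : ℕ} (ha : 0 < a) (hb : 0 < b) {x y : Fin n → ℂ}
    (hx : x ∈ pPow A a) (hy : y ∈ pPow A b) : eMul A x y ∈ pPow A (a + b) :=
  sMul_pPow_le_pPow A ha hb (eMul_mem_sMul A hx hy)

lemma pPow_le_of_forall_sMul_le {m : ℕ} (hm : 2 ≤ m) {S : Submodule ℂ (Fin n → ℂ)}
    (h : ∀ a b, 0 < a → a ≤ b → a + b = m → sMul A (pPow A a) (pPow A b) ≤ S) :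
    pPow A m ≤ S := by
  obtain ⟨m, rfl⟩ := Nat.exists_eq_add_of_le' hm
  rw [pPow_add_two]
  refine iSup_le fun i => ?_
  rcases le_total (i.1 + 1) (m + 1 - i.1) with hle | hle
  · exact h _ _ (by omega) hle (by omega)
  · rw [sMul_comm]
    exact h _ _ (by omega) hle (by omega)

end Products

noncomputable def tailSpan (n k a : ℕ) : Submodule ℂ (Fin n → ℂ) :=
  Submodule.span ℂ {v | ∃ j : Fin n, a ≤ (j : ℕ) ∧ (j : ℕ) ≤ k - 1 ∧ v = Pi.single j (1 : ℂ)}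

section TailSpan

variable {n k a : ℕ}

lemma mem_tailSpan {v : Fin n → ℂ} :
    v ∈ tailSpan n k a ↔ ∀ r : Fin n, v r ≠ 0 → a ≤ (r : ℕ) ∧ (r : ℕ) ≤ k - 1 := by
  have hset : {v | ∃ j : Fin n, a ≤ (j : ℕ) ∧ (j : ℕ) ≤ k - 1 ∧ v = Pi.single j (1 : ℂ)} =
      Pi.basisFun ℂ (Fin n) '' {j | a ≤ (j : ℕ) ∧ (j : ℕ) ≤ k - 1} := by
    ext v
    simp [eq_comm, and_assoc]
  rw [tailSpan, hset, Module.Basis.mem_span_image]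
  simp [Set.subset_def]

lemma single_mem_tailSpan {j : Fin n} (ha : a ≤ (j : ℕ)) (hk : (j : ℕ) ≤ k - 1) :
    Pi.single j (1 : ℂ) ∈ tailSpan n k a :=
  Submodule.subset_span ⟨j, ha, hk, rfl⟩

lemma tailSpan_anti {b : ℕ} (h : a ≤ b) : tailSpan n k b ≤ tailSpan n k a :=
  Submodule.span_mono fun _ ⟨j, hj, hjk, hv⟩ => ⟨j, h.trans hj, hjk, hv⟩

lemma tailSpan_eq_bot (h : k - 1 < a) : tailSpan n k a = ⊥ :=
  eq_bot_iff.2 fun v hv => (Submodule.mem_bot ℂ).2 <| funext fun r => by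
    by_contra hr
    have := mem_tailSpan.1 hv r hr
    omega

end TailSpan

noncomputable def level (m : ℕ) : ℕ := Nat.clog 2 ((m + 2) / 3)

lemma level_le_iff {m i : ℕ} : level m ≤ i ↔ m ≤ 3 * 2 ^ i := by
  rw [level, Nat.clog_le_iff_le_pow one_lt_two]
  omega

lemma lt_level_iff {m i : ℕ} : i < level m ↔ 3 * 2 ^ i < m :=
  lt_iff_lt_of_le_iff_le level_le_iff

lemma level_three_mul_two_pow (i : ℕ) : level (3 * 2 ^ i) = i := by
  refine le_antisymm (level_le_iff.2 le_rfl) ?_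
  rcases i with _ | i
  · exact Nat.zero_le _
  · exact lt_level_iff.2 (by rw [pow_succ]; have := i.one_le_two_pow; omega)

lemma level_three_mul_two_pow_add_one (i : ℕ) : level (3 * 2 ^ i + 1) = i + 1 :=
  le_antisymm (level_le_iff.2 (by rw [pow_succ]; have := i.one_le_two_pow; omega))
    (lt_level_iff.2 (by omega))

lemma level_le_succ_of_le_two_mul {m b : ℕ} (h : m ≤ 2 * b) : level m ≤ level b + 1 := by
  have := level_le_iff.1 (le_refl (level b))
  exact level_le_iff.2 (by rw [pow_succ]; omega)

lemma level_le_pred_of_two_mul_le {a m : ℕ} (h : 2 * a ≤ m + 1) : level a ≤ level m - 1 := by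
  have hm := level_le_iff.1 (le_refl (level m))
  rcases hl : level m with _ | i
  · rw [hl] at hm
    exact level_le_iff.2 (by omega)
  · rw [hl, pow_succ] at hm
    rw [Nat.add_sub_cancel]
    exact level_le_iff.2 (by omega)

noncomputable def ekMatrix (n k : ℕ) : Matrix (Fin n) (Fin n) ℂ := fun i j =>
  if (i : ℕ) = 0 then (if 1 ≤ (j : ℕ) ∧ (j : ℕ) ≤ k - 1 then 1 else 0)
  else if (i : ℕ) = 1 then (if (j : ℕ) = 3 then -1 else 0)
  else if 2 ≤ (i : ℕ) ∧ (i : ℕ) ≤ k - 2 ∧ (j : ℕ) = (i : ℕ) + 1 then 1 else 0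

section Ek

variable {n k : ℕ}

lemma ekMatrix_ne_zero {p r : Fin n} (h : ekMatrix n k p r ≠ 0) :
    ((p : ℕ) = 0 ∧ 1 ≤ (r : ℕ) ∧ (r : ℕ) ≤ k - 1) ∨ ((p : ℕ) = 1 ∧ (r : ℕ) = 3) ∨
      (2 ≤ (p : ℕ) ∧ (p : ℕ) ≤ k - 2 ∧ (r : ℕ) = p + 1) := by
  simp only [ekMatrix] at h
  split_ifs at h <;> first | omega | simp at h

lemma ekMatrix_apply_zero_one {i j : Fin n} (hk : 2 ≤ k) (hi : (i : ℕ) = 0) (hj : (j : ℕ) = 1) :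
    ekMatrix n k i j = 1 := by
  simp only [ekMatrix, hi, hj]
  split_ifs <;> first | rfl | omega

lemma ekMatrix_row_one {i j : Fin n} (hi : (i : ℕ) = 1) (hj : (j : ℕ) = 3) :
    ekMatrix n k i = -Pi.single j 1 := by
  funext r
  simp only [ekMatrix, hi, Pi.neg_apply, Pi.single_apply, Fin.ext_iff, hj]
  split_ifs <;> simp_all

lemma ekMatrix_row_of_two_le {i j : Fin n} (hi₂ : 2 ≤ (i : ℕ)) (hik : (i : ℕ) ≤ k - 2)
    (hj : (j : ℕ) = i + 1) : ekMatrix n k i = Pi.single j 1 := by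
  funext r
  simp only [ekMatrix, Pi.single_apply, Fin.ext_iff, hj]
  split_ifs <;> first | rfl | omega

lemma ekMatrix_apply_one_eq_apply_two (hk : 3 ≤ k) (p : Fin n) {r s : Fin n} (hr : (r : ℕ) = 1)
    (hs : (s : ℕ) = 2) : ekMatrix n k p r = ekMatrix n k p s := by
  simp only [ekMatrix, hr, hs]
  split_ifs <;> first | rfl | omega

end Ek

/-- Contains `E²`, since every row of `ekMatrix` has equal entries in columns `1` and `2`. -/
noncomputable def squareSpace (n k : ℕ) : Submodule ℂ (Fin n → ℂ) where
  carrier := {v | v ∈ tailSpan n k 1 ∧ ∀ r s : Fin n, (r : ℕ) = 1 → (s : ℕ) = 2 → v r = v s}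
  add_mem' hx hy := ⟨add_mem hx.1 hy.1, fun r s hr hs => by simp [hx.2 r s hr hs, hy.2 r s hr hs]⟩
  zero_mem' := ⟨zero_mem _, fun _ _ _ _ => rfl⟩
  smul_mem' c _ hx := ⟨Submodule.smul_mem _ c hx.1, fun r s hr hs => by simp [hx.2 r s hr hs]⟩

section Bounds

variable {n k : ℕ}

lemma sMul_top_top_le_squareSpace (hk : 4 ≤ k) :
    sMul (ekMatrix n k) ⊤ ⊤ ≤ squareSpace n k := by
  rw [sMul, Submodule.span_le]
  rintro _ ⟨x, -, y, -, rfl⟩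
  refine ⟨mem_tailSpan.2 fun r hr => ?_, fun r s hr hs => ?_⟩
  · obtain ⟨p, -, hp⟩ := Finset.exists_ne_zero_of_sum_ne_zero hr
    rcases ekMatrix_ne_zero (right_ne_zero_of_mul hp) with h | h | h <;> omega
  · exact Finset.sum_congr rfl fun p _ => by
      rw [ekMatrix_apply_one_eq_apply_two (by omega) p hr hs]

lemma sMul_tailSpan_le (hk : 4 ≤ k) {a : ℕ} (ha : 1 ≤ a) (Y : Submodule ℂ (Fin n → ℂ)) :
    sMul (ekMatrix n k) (tailSpan n k a) Y ≤ tailSpan n k (max 3 (a + 1)) := by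
  rw [sMul, Submodule.span_le]
  rintro _ ⟨x, hx, y, -, rfl⟩
  refine mem_tailSpan.2 fun r hr => ?_
  obtain ⟨p, -, hp⟩ := Finset.exists_ne_zero_of_sum_ne_zero hr
  have hxp := mem_tailSpan.1 hx p (left_ne_zero_of_mul (left_ne_zero_of_mul hp))
  rcases ekMatrix_ne_zero (right_ne_zero_of_mul hp) with h | h | h <;> omega

lemma sMul_squareSpace_le (hk : 4 ≤ k) :
    sMul (ekMatrix n k) (squareSpace n k) (squareSpace n k) ≤ tailSpan n k 4 := by
  rw [sMul, Submodule.span_le]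
  rintro _ ⟨x, hx, y, hy, rfl⟩
  have h3 := sMul_tailSpan_le hk le_rfl ⊤ (eMul_mem_sMul _ hx.1 (Submodule.mem_top (x := y)))
  refine mem_tailSpan.2 fun r hr => ?_
  have hr_range := mem_tailSpan.1 h3 r hr
  refine ⟨Nat.lt_of_le_of_ne (by omega) fun hr3 => hr ?_, hr_range.2⟩
  set i₁ : Fin n := ⟨1, by omega⟩
  set i₂ : Fin n := ⟨2, by omega⟩
  have hrest : ∀ p, p ≠ i₁ ∧ p ≠ i₂ → x p * y p * ekMatrix n k p r = 0 := by
    intro p hp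
    by_contra hne
    have hxp := mem_tailSpan.1 hx.1 p (left_ne_zero_of_mul (left_ne_zero_of_mul hne))
    simp only [ne_eq, Fin.ext_iff, i₁, i₂] at hp
    rcases ekMatrix_ne_zero (right_ne_zero_of_mul hne) with h | h | h <;> omega
  rw [eMul_apply, Fintype.sum_eq_add i₁ i₂ (by simp [i₁, i₂, Fin.ext_iff]) hrest,
    hx.2 i₁ i₂ rfl rfl, hy.2 i₁ i₂ rfl rfl,
    congrFun (ekMatrix_row_one (j := r) rfl hr3.symm) r,
    congrFun (ekMatrix_row_of_two_le (j := r) le_rfl (by simp [i₂]; omega) hr3.symm) r]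
  simp

end Bounds

section Powers

variable {n k : ℕ}

lemma pPow_two_le_squareSpace (hk : 4 ≤ k) : pPow (ekMatrix n k) 2 ≤ squareSpace n k :=
  pPow_le_of_forall_sMul_le _ le_rfl fun a b ha hab habm => by
    obtain ⟨rfl, rfl⟩ : a = 1 ∧ b = 1 := by omega
    rw [pPow_one]
    exact sMul_top_top_le_squareSpace hk

theorem pPow_le_tailSpan_level (hk : 4 ≤ k) :
    ∀ m, 3 ≤ m → pPow (ekMatrix n k) m ≤ tailSpan n k (3 + level m) := by
  intro m
  induction m using Nat.strong_induction_on with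
  | _ m ih =>
  intro hm
  have hV : pPow (ekMatrix n k) 2 ≤ tailSpan n k 1 := fun _ hv => (pPow_two_le_squareSpace hk hv).1
  refine pPow_le_of_forall_sMul_le _ (by omega) fun a b ha hab habm => ?_
  rw [sMul_comm]
  by_cases hb : 3 ≤ b
  · calc sMul (ekMatrix n k) (pPow (ekMatrix n k) b) (pPow (ekMatrix n k) a)
        ≤ sMul (ekMatrix n k) (tailSpan n k (3 + level b)) ⊤ :=
          sMul_mono _ (ih b (by omega) hb) le_top
      _ ≤ tailSpan n k (max 3 (3 + level b + 1)) := sMul_tailSpan_le hk (by omega) ⊤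
      _ ≤ tailSpan n k (3 + level m) := by
          have := level_le_succ_of_le_two_mul (show m ≤ 2 * b by omega)
          exact tailSpan_anti (by omega)
  obtain ⟨rfl, rfl⟩ | ⟨rfl, rfl⟩ : (a = 1 ∧ b = 2) ∨ (a = 2 ∧ b = 2) := by omega
  · calc sMul (ekMatrix n k) (pPow (ekMatrix n k) 2) (pPow (ekMatrix n k) 1)
        ≤ sMul (ekMatrix n k) (tailSpan n k 1) ⊤ := sMul_mono _ hV le_top
      _ ≤ tailSpan n k (3 + level m) := by
          have : level m ≤ 0 := level_le_iff.2 (by omega)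
          exact (sMul_tailSpan_le hk le_rfl ⊤).trans (tailSpan_anti (by omega))
  · calc sMul (ekMatrix n k) (pPow (ekMatrix n k) 2) (pPow (ekMatrix n k) 2)
        ≤ sMul (ekMatrix n k) (squareSpace n k) (squareSpace n k) :=
          sMul_mono _ (pPow_two_le_squareSpace hk) (pPow_two_le_squareSpace hk)
      _ ≤ tailSpan n k (3 + level m) := by
          have : level m ≤ 1 := level_le_iff.2 (by omega)
          exact (sMul_squareSpace_le hk).trans (tailSpan_anti (by omega))

lemma single_three_mem_pPow (hk : 4 ≤ k) {m : ℕ} (hm : 0 < m) (hm₃ : m ≤ 3) {j : Fin n}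
    (hj : (j : ℕ) = 3) : Pi.single j (1 : ℂ) ∈ pPow (ekMatrix n k) m := by
  set i₀ : Fin n := ⟨0, by omega⟩
  set i₁ : Fin n := ⟨1, by omega⟩
  have hsq (i : Fin n) : eMul (ekMatrix n k) (Pi.single i 1) (Pi.single i 1) = ekMatrix n k i := by
    rw [eMul_single_one_left, Pi.single_eq_same, one_smul]
  have hmem (i : Fin n) : Pi.single i (1 : ℂ) ∈ pPow (ekMatrix n k) 1 := by
    rw [pPow_one]; trivial
  rw [← neg_neg (Pi.single j 1), ← ekMatrix_row_one (k := k) (i := i₁) rfl hj]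
  refine Submodule.neg_mem _ ?_
  interval_cases m
  · rw [pPow_one]; trivial
  · rw [← hsq]
    exact eMul_mem_pPow _ one_pos one_pos (hmem i₁) (hmem i₁)
  -- `e₀ · e₀` has coordinate `1` at `e₁`, so `e₁ · (e₀ · e₀) = e₁ · e₁`
  · have hrow₀ : ekMatrix n k i₀ ∈ pPow (ekMatrix n k) 2 :=
      hsq i₀ ▸ eMul_mem_pPow _ one_pos one_pos (hmem i₀) (hmem i₀)
    have := eMul_mem_pPow _ one_pos two_pos (hmem i₁) hrow₀
    rwa [eMul_single_one_left, ekMatrix_apply_zero_one (by omega) rfl rfl, one_smul] at this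

theorem tailSpan_level_le_pPow (hk : 4 ≤ k) :
    ∀ m, 0 < m → tailSpan n k (3 + level m) ≤ pPow (ekMatrix n k) m := by
  intro m
  induction m using Nat.strong_induction_on with
  | _ m ih =>
  intro hm
  rw [tailSpan, Submodule.span_le]
  rintro _ ⟨j, hj, hjk, rfl⟩
  obtain rfl | hm₂ : m = 1 ∨ 2 ≤ m := by omega
  · rw [pPow_one]; trivial
  obtain hj₃ | hj₄ : (j : ℕ) = 3 ∨ 4 ≤ (j : ℕ) := by omega
  · exact single_three_mem_pPow hk hm (level_le_iff.1 (show level m ≤ 0 by omega)) hj₃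
  set p : Fin n := ⟨j - 1, by omega⟩
  have hsq : eMul (ekMatrix n k) (Pi.single p 1) (Pi.single p 1) = Pi.single j 1 := by
    rw [eMul_single_one_left, Pi.single_eq_same, one_smul,
      ekMatrix_row_of_two_le (k := k) (j := j) (by simp [p]; omega) (by simp [p]; omega)
        (by simp [p]; omega)]
  -- both halves of `m = m / 2 + (m - m / 2)` have level at most `level m - 1`
  have hp (a : ℕ) (ha : 0 < a) (ham : 2 * a ≤ m + 1) :
      Pi.single p (1 : ℂ) ∈ pPow (ekMatrix n k) a := by
    have := level_le_pred_of_two_mul_le ham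
    exact ih a (by omega) ha
      (single_mem_tailSpan (a := 3 + level a) (by simp [p]; omega) (by simp [p]; omega))
  rw [← hsq, ← Nat.add_sub_cancel' (Nat.div_le_self m 2)]
  exact eMul_mem_pPow _ (by omega) (by omega) (hp _ (by omega) (by omega))
    (hp _ (by omega) (by omega))

theorem pPow_ekMatrix_eq (hk : 4 ≤ k) {m : ℕ} (hm : 3 ≤ m) :
    pPow (ekMatrix n k) m = tailSpan n k (3 + level m) :=
  le_antisymm (pPow_le_tailSpan_level hk m hm) (tailSpan_level_le_pPow hk m (by omega))

end Powers

/-- for `4 ≤ k ≤ n`, the evolution algebra `E_k` with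
`e₁·e₁ = e₂+⋯+e_k`, `e₂·e₂ = -e₄`, `eᵢ·eᵢ = e_{i+1}` for `3 ≤ i ≤ k-1` and
`eᵢ·eᵢ = 0` for `i ≥ k` satisfies `E_k^{3·2ⁱ} = span{e_{4+i},…,e_k}` for
`0 ≤ i ≤ k-4`, and its nilpotency index is exactly `1 + 3·2^{k-4}`. -/
theorem intermediate_nilpotency_index {n k : ℕ} (hk4 : 4 ≤ k) (hkn : k ≤ n)
    (A : Matrix (Fin n) (Fin n) ℂ)
    (hA : ∀ i j : Fin n, A i j =
      if (i : ℕ) = 0 then (if 1 ≤ (j : ℕ) ∧ (j : ℕ) ≤ k - 1 then 1 else 0)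
      else if (i : ℕ) = 1 then (if (j : ℕ) = 3 then -1 else 0)
      else if 2 ≤ (i : ℕ) ∧ (i : ℕ) ≤ k - 2 ∧ (j : ℕ) = (i : ℕ) + 1 then 1 else 0) :
    (∀ i : ℕ, i ≤ k - 4 →
      pPow A (3 * 2 ^ i) =
        Submodule.span ℂ
          {v | ∃ j : Fin n, 3 + i ≤ (j : ℕ) ∧ (j : ℕ) ≤ k - 1 ∧ v = Pi.single j (1 : ℂ)}) ∧
    pPow A (1 + 3 * 2 ^ (k - 4)) = ⊥ ∧
    (∀ m : ℕ, 1 ≤ m → m < 1 + 3 * 2 ^ (k - 4) → pPow A m ≠ ⊥) := by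
  obtain rfl : A = ekMatrix n k := Matrix.ext hA
  have hpos := (k - 4).one_le_two_pow
  refine ⟨fun i _ => ?_, ?_, fun m hm hmk hbot => ?_⟩
  · rw [pPow_ekMatrix_eq hk4 (by have := i.one_le_two_pow; omega), level_three_mul_two_pow]
    rfl
  · rw [add_comm, pPow_ekMatrix_eq hk4 (by omega), level_three_mul_two_pow_add_one]
    exact tailSpan_eq_bot (by omega)
  · have hlevel : level m ≤ k - 4 := level_le_iff.2 (by omega)
    let j : Fin n := ⟨k - 1, by omega⟩
    have hmem : Pi.single j (1 : ℂ) ∈ pPow (ekMatrix n k) m := tailSpan_level_le_pPow hk4 m hm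
      (single_mem_tailSpan (show 3 + level m ≤ k - 1 by omega) le_rfl)
    rw [hbot, Submodule.mem_bot] at hmem
    simpa using congrFun hmem j
end
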